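/- Let α ∈ (0,1) and z > 0 satisfy Φ̄(z) = α/2, and define g(ω) = z/√ω + (2/α)·( φ(z/√ω) − (z/√ω)·Φ̄(z/√ω) ) for ω > 0. Then g is twice differentiable at ω = 1 with g''(1) = z²·φ(z)/(2α) > 0. -/

import Mathlib

open MeasureTheory ProbabilityTheory Set

/-- The standard normal density `φ(t) = (2π)^{-1/2} exp(-t²/2)`. -/
noncomputable def phi (t : ℝ) : ℝ := (Real.sqrt (2 * Real.pi))⁻¹ * Real.exp (-t ^ 2 / 2)

/-- The standard normal cumulative distribution function `Φ`. -/
noncomputable def Phi (t : ℝ) : ℝ := ((gaussianReal 0 1) (Iic t)).toReal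

/-- The expected-interval-score factor `g(ω) = z/√ω + (2/α)(φ(z/√ω) − (z/√ω) Φ̄(z/√ω))`. -/
noncomputable def g (z α ω : ℝ) : ℝ :=
  z / Real.sqrt ω
    + (2 / α) * (phi (z / Real.sqrt ω) - (z / Real.sqrt ω) * (1 - Phi (z / Real.sqrt ω)))

open Filter Topology

/-!
Write `g z α = G ∘ u` with `u ω = z / √ω` and `G y = y + (2/α)(φ(y) − y Φ̄(y))` (`G = gOuter α`).
Since `φ' = −yφ`, the `y φ` terms cancel and `G' = 1 − (2/α) Φ̄`, so `G'' = (2/α) φ`.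
The hypothesis `Φ̄(z) = α/2` says `G'(z) = 0`, which kills the `G'(u 1) u''(1)` term of the
second-order chain rule, leaving `g''(1) = G''(z) u'(1)² = (2/α) φ(z) (z/2)²`.
-/

theorem hasDerivAt_deriv_comp_of_deriv_eq_zero {𝕜 : Type*} [NontriviallyNormedField 𝕜]
    {F F' u u' : 𝕜 → 𝕜} {x c : 𝕜} (hF : ∀ y, HasDerivAt F (F' y) y)
    (hF' : HasDerivAt F' c (u x)) (hF'_zero : F' (u x) = 0)
    (hu : ∀ᶠ y in 𝓝 x, HasDerivAt u (u' y) y) (hu' : DifferentiableAt 𝕜 u' x) :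
    HasDerivAt (deriv (F ∘ u)) (c * u' x ^ 2) x := by
  have hderiv : deriv (F ∘ u) =ᶠ[𝓝 x] fun y => F' (u y) * u' y :=
    hu.mono fun y hy => ((hF (u y)).comp y hy).deriv
  have hprod := (hF'.comp x hu.self_of_nhds).mul hu'.hasDerivAt
  refine (hprod.congr_deriv ?_).congr_of_eventuallyEq hderiv
  simp only [Function.comp_apply, hF'_zero]
  ring

lemma hasDerivAt_div_sqrt (c : ℝ) {ω : ℝ} (hω : 0 < ω) :
    HasDerivAt (fun ω => c / Real.sqrt ω) (-c / (2 * Real.sqrt ω ^ 3)) ω := by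
  have hsqrt : Real.sqrt ω ≠ 0 := (Real.sqrt_pos.mpr hω).ne'
  exact ((hasDerivAt_const ω c).div (Real.hasDerivAt_sqrt hω.ne') hsqrt).congr_deriv
    (by field_simp; ring)

lemma phi_eq_gaussianPDFReal : phi = gaussianPDFReal 0 1 := by
  funext x
  simp [phi, gaussianPDFReal]

lemma integrable_phi : Integrable phi := by
  rw [phi_eq_gaussianPDFReal]
  exact integrable_gaussianPDFReal 0 1

lemma continuous_phi : Continuous phi := by
  unfold phi
  fun_prop

lemma phi_pos (t : ℝ) : 0 < phi t := by
  unfold phi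
  positivity

lemma hasDerivAt_phi (t : ℝ) : HasDerivAt phi (-t * phi t) t := by
  have hexp : HasDerivAt (fun t : ℝ => -t ^ 2 / 2) (-t) t :=
    ((hasDerivAt_pow 2 t).neg.div_const 2).congr_deriv (by ring)
  exact ((hexp.exp).const_mul _).congr_deriv (by unfold phi; ring)

lemma Phi_eq_integral (t : ℝ) : Phi t = ∫ x in Iic t, phi x := by
  rw [Phi, gaussianReal_apply_eq_integral 0 one_ne_zero,
    ENNReal.toReal_ofReal (integral_nonneg fun x => gaussianPDFReal_nonneg 0 1 x),
    phi_eq_gaussianPDFReal]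

lemma hasDerivAt_Phi (t : ℝ) : HasDerivAt Phi (phi t) t := by
  have hPhi : Phi = fun s => Phi 0 + ∫ x in (0 : ℝ)..s, phi x := by
    funext s
    rw [Phi_eq_integral, Phi_eq_integral, ← intervalIntegral.integral_Iic_sub_Iic
      integrable_phi.integrableOn integrable_phi.integrableOn]
    ring
  rw [hPhi]
  exact (intervalIntegral.integral_hasDerivAt_right integrable_phi.intervalIntegrable
    continuous_phi.aestronglyMeasurable.stronglyMeasurableAtFilter
    continuous_phi.continuousAt).const_add _

noncomputable def gOuter (α y : ℝ) : ℝ := y + (2 / α) * (phi y - y * (1 - Phi y))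

lemma g_eq_gOuter_comp (z α : ℝ) : g z α = gOuter α ∘ fun ω => z / Real.sqrt ω := rfl

lemma hasDerivAt_gOuter (α y : ℝ) :
    HasDerivAt (gOuter α) (1 - (2 / α) * (1 - Phi y)) y :=
  ((hasDerivAt_id y).add (((hasDerivAt_phi y).sub ((hasDerivAt_id y).mul
    ((hasDerivAt_Phi y).const_sub 1))).const_mul (2 / α))).congr_deriv (by simp only [id_eq]; ring)

lemma hasDerivAt_deriv_gOuter (α y : ℝ) :
    HasDerivAt (fun y => 1 - (2 / α) * (1 - Phi y)) ((2 / α) * phi y) y :=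
  ((((hasDerivAt_Phi y).const_sub 1).const_mul (2 / α)).const_sub 1).congr_deriv (by ring)

/-- If `Φ̄(z) = α/2`, then `g` is twice differentiable at `ω = 1` with
`g''(1) = z² φ(z)/(2α) > 0`. -/
theorem stmt14 (α z : ℝ) (hα : α ∈ Ioo (0 : ℝ) 1) (hz : 0 < z)
    (hzα : 1 - Phi z = α / 2) :
    DifferentiableAt ℝ (g z α) 1
      ∧ HasDerivAt (deriv (g z α)) (z ^ 2 * phi z / (2 * α)) 1
      ∧ 0 < z ^ 2 * phi z / (2 * α) := by
  have hα0 : 0 < α := hα.1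
  have hφ := phi_pos z
  have hu : ∀ᶠ ω in 𝓝 (1 : ℝ), HasDerivAt (fun ω => z / Real.sqrt ω)
      (-z / (2 * Real.sqrt ω ^ 3)) ω :=
    (eventually_gt_nhds one_pos).mono fun ω hω => hasDerivAt_div_sqrt z hω
  have hu' : DifferentiableAt ℝ (fun ω : ℝ => -z / (2 * Real.sqrt ω ^ 3)) 1 := by
    fun_prop (disch := norm_num)
  have hG'_zero : 1 - (2 / α) * (1 - Phi (z / Real.sqrt 1)) = 0 := by
    rw [Real.sqrt_one, div_one, hzα]
    field_simp
    norm_num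
  rw [g_eq_gOuter_comp]
  refine ⟨((hasDerivAt_gOuter α _).comp 1 hu.self_of_nhds).differentiableAt, ?_, by positivity⟩
  refine (hasDerivAt_deriv_comp_of_deriv_eq_zero (u := fun ω => z / Real.sqrt ω) (x := 1)
    (hasDerivAt_gOuter α) (hasDerivAt_deriv_gOuter α _)
    hG'_zero hu hu').congr_deriv ?_
  rw [Real.sqrt_one, div_one]
  field_simp
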